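/- Let A ⊆ {1,…,N} satisfy 1 ≤ r_N(A) ≤ (N+1)/2, and let a be the left-most site of A. Then r(s_a(A)) = r_N(A), and for every a' ∈ A with a' ≠ a one has r(s_{a'}(A)) ≥ (N+3)/2; in particular r(s_a(A)) < r(s_{a'}(A)). (Equation (property_left-most) of the Supplemental Material.) -/

import Mathlib

/-!
Write `r = r_N(A)`. Every site of `A` is `π(j)` for some `j` in the window `[a, a + r - 1]`, and
the cut `s_a` sends `π(j)` back to `j`; since `a` and `π(a + r - 1)` lie in `A`, the cut image
of `A` spans exactly that window. For another site `a' = π(j')` with `a < j' ≤ a + r - 1`, the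
cut `s_{a'}` places `a'` first and sends `a` to `a' + N - (j' - a)`, so `r(s_{a'}(A))` is at
least `N - r + 2`, which is `≥ (N + 3)/2` and `> r` because `2r ≤ N + 1`.
-/

/-- `projN N i` is the unique element of `{1, …, N}` congruent to `i` mod `N`. -/
def projN (N i : ℤ) : ℤ := (i - 1) % N + 1

/-- The cut `s_n` of the chain: `s_n i = i` if `i ≥ n`, and `i + N` if `i < n`. -/
def cutN (N n i : ℤ) : ℤ := if n ≤ i then i else i + N

/-- The range `r(A) = max A - min A + 1` of a finite nonempty set, with `r(∅) = 0`. -/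
def rng (A : Finset ℤ) : ℤ := if h : A.Nonempty then A.max' h - A.min' h + 1 else 0

/-- `r_N(A) = min over n ∈ {1,…,N} of r(s_n(A))`. -/
noncomputable def rN (N : ℤ) (A : Finset ℤ) : ℤ :=
  sInf ((fun n => rng (A.image (cutN N n))) '' Set.Icc 1 N)

open Finset

theorem projN_modEq (N j : ℤ) : projN N j ≡ j [ZMOD N] := by
  have h := (Int.mod_modEq (j - 1) N).add_right 1
  rwa [sub_add_cancel] at h

theorem projN_mem_Icc {N : ℤ} (hN : 0 < N) (j : ℤ) : projN N j ∈ Icc 1 N := by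
  have h₀ := Int.emod_nonneg (j - 1) hN.ne'
  have h₁ := Int.emod_lt_of_pos (j - 1) hN
  rw [projN, mem_Icc]
  omega

theorem projN_of_mem_Icc {N x : ℤ} (hx : x ∈ Icc 1 N) : projN N x = x := by
  rw [mem_Icc] at hx
  rw [projN, Int.emod_eq_of_lt (by omega) (by omega), sub_add_cancel]

theorem cutN_self (N n : ℤ) : cutN N n n = n := if_pos le_rfl

theorem cutN_eq_add_emod {N n x : ℤ} (h₁ : n - N ≤ x) (h₂ : x < n + N) :
    cutN N n x = n + (x - n) % N := by
  unfold cutN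
  split_ifs with h
  · rw [Int.emod_eq_of_lt (by omega) (by omega)]
    ring
  · rw [← Int.add_emod_right, Int.emod_eq_of_lt (by omega) (by omega)]
    ring

theorem cutN_projN {N n : ℤ} (hN : 0 < N) (hn : n ∈ Icc 1 N) (j : ℤ) :
    cutN N n (projN N j) = n + (j - n) % N := by
  have hj := mem_Icc.1 (projN_mem_Icc hN j)
  rw [mem_Icc] at hn
  rw [cutN_eq_add_emod (by omega) (by omega)]
  exact congrArg (n + ·) ((projN_modEq N j).sub_right n)

theorem cutN_projN_of_mem_Icc {N n j : ℤ} (hN : 0 < N) (hn : n ∈ Icc 1 N)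
    (hj : j ∈ Icc n (n + N - 1)) : cutN N n (projN N j) = j := by
  rw [mem_Icc] at hj
  rw [cutN_projN hN hn, Int.emod_eq_of_lt (by omega) (by omega)]
  ring

theorem cutN_of_projN_eq {N a a' j' : ℤ} (hN : 0 < N) (ha : a ∈ Icc 1 N) (ha' : a' ∈ Icc 1 N)
    (hj' : projN N j' = a') (h₁ : a < j') (h₂ : j' < a + N) :
    cutN N a' a = a' + N + a - j' := by
  calc cutN N a' a = cutN N a' (projN N a) := by rw [projN_of_mem_Icc ha]
    _ = a' + (a - j' + N) % N := by
      rw [cutN_projN hN ha', Int.add_emod_right, ← hj']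
      exact congrArg (projN N j' + ·) ((projN_modEq N j').sub_left a)
    _ = a' + N + a - j' := by
      rw [Int.emod_eq_of_lt (by omega) (by omega)]
      ring

theorem rng_eq_of_subset_Icc {S : Finset ℤ} {lo hi : ℤ} (hlo : lo ∈ S) (hhi : hi ∈ S)
    (hS : S ⊆ Icc lo hi) : rng S = hi - lo + 1 := by
  have hne : S.Nonempty := ⟨lo, hlo⟩
  have hmin : S.min' hne = lo :=
    le_antisymm (S.min'_le _ hlo) (S.le_min' _ _ fun y hy => (mem_Icc.1 (hS hy)).1)
  have hmax : S.max' hne = hi :=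
    le_antisymm (S.max'_le _ _ fun y hy => (mem_Icc.1 (hS hy)).2) (S.le_max' _ hhi)
  rw [rng, dif_pos hne, hmin, hmax]

theorem sub_add_one_le_rng {S : Finset ℤ} {x y : ℤ} (hx : x ∈ S) (hy : y ∈ S) :
    y - x + 1 ≤ rng S := by
  rw [rng, dif_pos ⟨x, hx⟩]
  linarith [S.min'_le x hx, S.le_max' y hy]

theorem rng_image_cutN_of_subset_window {N a r : ℤ} {A : Finset ℤ} (hN : 0 < N)
    (haI : a ∈ Icc 1 N) (hr : r ≤ N) (ha : a ∈ A) (hend : projN N (a + r - 1) ∈ A)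
    (hA : A ⊆ (Icc a (a + r - 1)).image (projN N)) :
    rng (A.image (cutN N a)) = r := by
  have hwindow : ∀ j ∈ Icc a (a + r - 1), cutN N a (projN N j) = j := fun j hj =>
    cutN_projN_of_mem_Icc hN haI (Icc_subset_Icc le_rfl (by omega) hj)
  have hsub : A.image (cutN N a) ⊆ Icc a (a + r - 1) := by
    intro y hy
    obtain ⟨x, hx, rfl⟩ := mem_image.1 hy
    obtain ⟨j, hj, rfl⟩ := mem_image.1 (hA hx)
    rwa [hwindow j hj]
  have hr₁ : 1 ≤ r := by
    obtain ⟨j, hj, -⟩ := mem_image.1 (hA ha)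
    rw [mem_Icc] at hj
    omega
  have hlo : a ∈ A.image (cutN N a) := mem_image.2 ⟨a, ha, cutN_self N a⟩
  have hhi : a + r - 1 ∈ A.image (cutN N a) :=
    mem_image.2 ⟨_, hend, cutN_projN_of_mem_Icc hN haI (by rw [mem_Icc]; omega)⟩
  rw [rng_eq_of_subset_Icc hlo hhi hsub]
  ring

theorem le_rng_image_cutN {N a j' : ℤ} {A : Finset ℤ} (hN : 0 < N) (hA : A ⊆ Icc 1 N)
    (ha : a ∈ A) (ha' : projN N j' ∈ A) (h₁ : a < j') (h₂ : j' < a + N) :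
    N + a - j' + 1 ≤ rng (A.image (cutN N (projN N j'))) := by
  have hfirst := mem_image_of_mem (cutN N (projN N j')) ha'
  have hlast := mem_image_of_mem (cutN N (projN N j')) ha
  rw [cutN_self] at hfirst
  rw [cutN_of_projN_eq hN (hA ha) (hA ha') rfl h₁ h₂] at hlast
  linarith [sub_add_one_le_rng hfirst hlast]

theorem leftmost_site_property_general (N : ℤ) (hN : 1 ≤ N)
    (A : Finset ℤ) (hA : A ⊆ Finset.Icc 1 N)
    (h2 : 2 * rN N A ≤ N + 1)
    (a : ℤ) (ha : a ∈ A) (ha1 : projN N (a + rN N A - 1) ∈ A)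
    (ha2 : A ⊆ (Finset.Icc a (a + rN N A - 1)).image (projN N)) :
    rng (A.image (cutN N a)) = rN N A ∧
      ∀ a' ∈ A, a' ≠ a →
        N + 3 ≤ 2 * rng (A.image (cutN N a')) ∧
          rng (A.image (cutN N a)) < rng (A.image (cutN N a')) := by
  have hN' : 0 < N := hN
  have hleft := rng_image_cutN_of_subset_window hN' (hA ha) (by omega) ha ha1 ha2
  refine ⟨hleft, fun a' ha' hne => ?_⟩
  obtain ⟨j', hj', rfl⟩ := mem_image.1 (ha2 ha')
  rw [mem_Icc] at hj'
  have hj'a : j' ≠ a := by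
    rintro rfl
    exact hne (projN_of_mem_Icc (hA ha))
  have hbound := le_rng_image_cutN hN' hA ha ha' (by omega) (by omega)
  omega

/-- Eq. (property_left-most) of the Supplemental Material: If
`A ⊆ {1,…,N}` with `1 ≤ r_N(A) ≤ (N+1)/2` and `a` is the left-most site of
`A`, then `r(s_a(A)) = r_N(A)`, and for every `a' ∈ A` with `a' ≠ a` one has
`r(s_{a'}(A)) ≥ (N+3)/2`; in particular `r(s_a(A)) < r(s_{a'}(A))`. -/
theorem leftmost_site_property (N : ℤ) (hN : 1 ≤ N)
    (A : Finset ℤ) (hA : A ⊆ Finset.Icc 1 N)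
    (h1 : 1 ≤ rN N A) (h2 : 2 * rN N A ≤ N + 1)
    (a : ℤ) (ha : a ∈ A) (ha1 : projN N (a + rN N A - 1) ∈ A)
    (ha2 : A ⊆ (Finset.Icc a (a + rN N A - 1)).image (projN N)) :
    rng (A.image (cutN N a)) = rN N A ∧
      ∀ a' ∈ A, a' ≠ a →
        N + 3 ≤ 2 * rng (A.image (cutN N a')) ∧
          rng (A.image (cutN N a)) < rng (A.image (cutN N a')) :=
  leftmost_site_property_general N hN A hA h2 a ha ha1 ha2
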